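/- arXiv:1608.04591 — 4 statements merged into one kernel-verified Lean document; each statement's English description precedes it below -/
import Mathlib

section
/- For every real number α, liminf over positive integers q of q·‖qα‖ is at most 1/√5, where ‖t‖ denotes the distance from t to the nearest integer. -/
/-- Distance from a real number to the nearest integer. -/
noncomputable def distNearestInt (t : ℝ) : ℝ := ⨅ n : ℤ, |t - n|

/-!
For irrational `α` with complete quotients `xₖ` and convergents `pₙ / qₙ`, the identity
`α = (pₙ₋₁ + xₙ₊₁ pₙ) / (qₙ₋₁ + xₙ₊₁ qₙ)` and `pₙ qₙ₋₁ - pₙ₋₁ qₙ = ±1` give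
`qₙ |qₙ α - pₙ| = 1 / tₙ` with `tₙ = xₙ₊₁ + qₙ₋₁ / qₙ = 1 / xₙ₊₂ + qₙ₊₁ / qₙ`.
If `tₙ, tₙ₊₁ < √5`, then `γ = qₙ / qₙ₊₁` satisfies `1 < γ (√5 - γ)`, i.e. `γ > φ⁻¹`.
So three consecutive `tₙ < √5` would give `qₙ / qₙ₊₁ > φ⁻¹` and `qₙ₊₁ / qₙ₊₂ > φ⁻¹`, contradicting
`qₙ₊₂ / qₙ₊₁ ≥ 1 + qₙ / qₙ₊₁ > 1 + φ⁻¹ = φ`. Hence `tₙ ≥ √5` infinitely often.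
For rational `α`, `q ‖q α‖` vanishes at every multiple of the denominator.
-/

lemma distNearestInt_nonneg (t : ℝ) : 0 ≤ distNearestInt t :=
  Real.iInf_nonneg fun _ => abs_nonneg _

lemma distNearestInt_le (t : ℝ) (n : ℤ) : distNearestInt t ≤ |t - n| :=
  ciInf_le ⟨0, fun _ ⟨_, h⟩ => h ▸ abs_nonneg _⟩ n

lemma distNearestInt_intCast (n : ℤ) : distNearestInt n = 0 :=
  le_antisymm (by simpa using distNearestInt_le n n) (distNearestInt_nonneg _)

open Filter Real goldenRatio

lemma inv_goldenRatio_lt_of_add_lt_sqrt_five {β γ : ℝ} (hβ : 0 < β) (hγ : 0 < γ)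
    (hsum : β + γ < √5) (hinv : β⁻¹ + γ⁻¹ < √5) : φ⁻¹ < γ := by
  have hφ : φ + φ⁻¹ = √5 := by rw [inv_goldenRatio, ← goldenRatio_sub_goldenConj]; ring
  have hφφ : φ * φ⁻¹ = 1 := mul_inv_cancel₀ goldenRatio_ne_zero
  have hlt : φ⁻¹ < φ := by
    rw [inv_goldenRatio]; linarith [goldenRatio_pos, goldenRatio_add_goldenConj, one_lt_goldenRatio]
  -- `β < √5 - γ` turns `hinv` into `γ (√5 - γ) > 1`, i.e. `(γ - φ⁻¹)(γ - φ) < 0`.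
  have hquad : 1 < γ * (√5 - γ) := by
    have hβ' : (√5 - γ)⁻¹ < β⁻¹ := inv_strictAnti₀ hβ (by linarith)
    have h : (√5 - γ)⁻¹ + γ⁻¹ < √5 := by linarith
    rw [inv_add_inv (by linarith) hγ.ne', div_lt_iff₀ (by nlinarith)] at h
    nlinarith
  by_contra! hle
  nlinarith [mul_nonneg (sub_nonneg.2 hle) (sub_nonneg.2 (hle.trans hlt.le))]

namespace ContinuedFraction

noncomputable def compQuot (α : ℝ) : ℕ → ℝ
  | 0 => α
  | n + 1 => (Int.fract (compQuot α n))⁻¹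

-- Shifted by one from the classical `pₙ, qₙ`: `num α (n + 1) = pₙ`, `den α (n + 1) = qₙ`,
-- and index `0` holds `p₋₁ = 1`, `q₋₁ = 0`.
noncomputable def num (α : ℝ) : ℕ → ℤ
  | 0 => 1
  | 1 => ⌊α⌋
  | n + 2 => ⌊compQuot α (n + 1)⌋ * num α (n + 1) + num α n

noncomputable def den (α : ℝ) : ℕ → ℤ
  | 0 => 0
  | 1 => 1
  | n + 2 => ⌊compQuot α (n + 1)⌋ * den α (n + 1) + den α n

variable {α : ℝ}

lemma compQuot_eq_floor_add_inv (α : ℝ) (n : ℕ) :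
    compQuot α n = ⌊compQuot α n⌋ + (compQuot α (n + 1))⁻¹ := by
  rw [compQuot, inv_inv, Int.floor_add_fract]

lemma irrational_compQuot (hα : Irrational α) : ∀ n, Irrational (compQuot α n)
  | 0 => hα
  | n + 1 => by
    rw [compQuot, Int.fract]
    exact ((irrational_compQuot hα n).sub_intCast _).inv

lemma one_lt_compQuot_succ (hα : Irrational α) (n : ℕ) : 1 < compQuot α (n + 1) := by
  have hfract : 0 < Int.fract (compQuot α n) :=
    (Int.fract_nonneg _).lt_of_ne ((irrational_compQuot hα n).sub_intCast _).ne_zero.symm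
  exact (one_lt_inv₀ hfract).2 (Int.fract_lt_one _)

lemma one_le_floor_compQuot_succ (hα : Irrational α) (n : ℕ) : 1 ≤ ⌊compQuot α (n + 1)⌋ :=
  Int.le_floor.2 (by exact_mod_cast (one_lt_compQuot_succ hα n).le)

lemma den_nonneg (hα : Irrational α) : ∀ n, 0 ≤ den α n
  | 0 => le_rfl
  | 1 => zero_le_one
  | n + 2 => by
    have := one_le_floor_compQuot_succ hα n
    have := den_nonneg hα n
    have := den_nonneg hα (n + 1)
    rw [den]; positivity

lemma den_succ_add_den_le (hα : Irrational α) (n : ℕ) :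
    den α (n + 1) + den α n ≤ den α (n + 2) := by
  rw [den]
  nlinarith [one_le_floor_compQuot_succ hα n, den_nonneg hα (n + 1)]

lemma one_le_den_succ (hα : Irrational α) : ∀ n, 1 ≤ den α (n + 1)
  | 0 => le_rfl
  | n + 1 => by
    have := den_succ_add_den_le hα n
    have := one_le_den_succ hα n
    have := den_nonneg hα n
    show 1 ≤ den α (n + 2)
    omega

lemma le_den_succ (hα : Irrational α) : ∀ n : ℕ, (n : ℤ) ≤ den α (n + 1)
  | 0 => zero_le_one
  | 1 => one_le_den_succ hα 1
  | n + 2 => by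
    have h₁ : ((n + 1 : ℕ) : ℤ) ≤ den α (n + 2) := le_den_succ hα (n + 1)
    have h₂ : 1 ≤ den α (n + 1) := one_le_den_succ hα n
    have h₃ : den α (n + 2) + den α (n + 1) ≤ den α (n + 3) := den_succ_add_den_le hα (n + 1)
    show ((n + 2 : ℕ) : ℤ) ≤ den α (n + 3)
    push_cast at h₁ ⊢
    omega

lemma den_succ_pos (hα : Irrational α) (n : ℕ) : 0 < (den α (n + 1) : ℝ) := by
  exact_mod_cast one_le_den_succ hα n

lemma den_mul_num_sub_num_mul_den (α : ℝ) :
    ∀ n, den α (n + 1) * num α n - num α (n + 1) * den α n = (-1) ^ n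
  | 0 => by simp [num, den]
  | n + 1 => by
    rw [num, den, pow_succ, ← den_mul_num_sub_num_mul_den α n]
    ring

lemma compQuot_mul_add_mul_compQuot (hα : Irrational α) {r : ℕ → ℝ}
    (hr : ∀ n, r (n + 2) = ⌊compQuot α (n + 1)⌋ * r (n + 1) + r n) (n : ℕ) :
    compQuot α (n + 2) * (r n + compQuot α (n + 1) * r (n + 1))
      = r (n + 1) + compQuot α (n + 2) * r (n + 2) := by
  have hx := compQuot_eq_floor_add_inv α (n + 1)
  have hne : compQuot α (n + 2) ≠ 0 := (zero_lt_one.trans (one_lt_compQuot_succ hα (n + 1))).ne'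
  rw [hr]
  linear_combination (compQuot α (n + 2) * r (n + 1)) * hx + r (n + 1) * mul_inv_cancel₀ hne

lemma mul_den_add_eq_num_add (hα : Irrational α) :
    ∀ n, α * (den α n + compQuot α (n + 1) * den α (n + 1))
      = num α n + compQuot α (n + 1) * num α (n + 1)
  | 0 => by
    have h : compQuot α 1 * Int.fract α = 1 :=
      inv_mul_cancel₀ (hα.sub_intCast ⌊α⌋).ne_zero
    simp only [num, den, Int.cast_zero, Int.cast_one, zero_add, mul_one]
    rw [Int.fract] at h
    linear_combination h
  | n + 1 => by
    have hden := compQuot_mul_add_mul_compQuot hα (r := fun k => (den α k : ℝ))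
      (fun k => by simp [den]) n
    have hnum := compQuot_mul_add_mul_compQuot hα (r := fun k => (num α k : ℝ))
      (fun k => by simp [num]) n
    rw [← hden, ← hnum, ← mul_den_add_eq_num_add hα n]
    ring

noncomputable def denRatio (α : ℝ) (n : ℕ) : ℝ := den α n / den α (n + 1)

lemma denRatio_succ_pos (hα : Irrational α) (n : ℕ) : 0 < denRatio α (n + 1) :=
  div_pos (den_succ_pos hα n) (den_succ_pos hα (n + 1))

lemma inv_denRatio_succ (hα : Irrational α) (n : ℕ) :
    (denRatio α (n + 1))⁻¹ = ⌊compQuot α (n + 1)⌋ + denRatio α n := by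
  have hq := (den_succ_pos hα n).ne'
  rw [denRatio, denRatio, inv_div, den]
  push_cast
  field_simp

lemma compQuot_add_denRatio_eq (hα : Irrational α) (n : ℕ) :
    compQuot α (n + 1) + denRatio α n = (compQuot α (n + 2))⁻¹ + (denRatio α (n + 1))⁻¹ := by
  rw [inv_denRatio_succ hα]
  linear_combination compQuot_eq_floor_add_inv α (n + 1)

lemma den_mul_abs_den_mul_sub_num (hα : Irrational α) (n : ℕ) :
    den α (n + 1) * |den α (n + 1) * α - num α (n + 1)|
      = (compQuot α (n + 1) + denRatio α n)⁻¹ := by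
  set D := (den α n : ℝ) + compQuot α (n + 1) * den α (n + 1) with hD_def
  have hq := den_succ_pos hα n
  have hD : 0 < D := by
    have := den_nonneg hα n
    have := one_lt_compQuot_succ hα n
    positivity
  have hdet : ((den α (n + 1) : ℝ) * num α n - num α (n + 1) * den α n) = (-1) ^ n := by
    exact_mod_cast den_mul_num_sub_num_mul_den α n
  have herr : (den α (n + 1) * α - num α (n + 1)) * D = (-1) ^ n := by
    linear_combination (den α (n + 1) : ℝ) * mul_den_add_eq_num_add hα n + hdet
  rw [eq_div_of_mul_eq hD.ne' herr, abs_div, abs_pow, abs_neg, abs_one, one_pow,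
    abs_of_pos hD, denRatio, hD_def]
  field_simp
  ring

lemma exists_sqrt_five_le_compQuot_add_denRatio (hα : Irrational α) (N : ℕ) :
    ∃ n, N ≤ n ∧ √5 ≤ compQuot α (n + 1) + denRatio α n := by
  by_contra! h
  have hratio : ∀ n, N ≤ n → φ⁻¹ < denRatio α (n + 1) := fun n hn =>
    inv_goldenRatio_lt_of_add_lt_sqrt_five (zero_lt_one.trans (one_lt_compQuot_succ hα (n + 1)))
      (denRatio_succ_pos hα n) (h (n + 1) (by omega))
      (compQuot_add_denRatio_eq hα n ▸ h n hn)
  have hφ : φ = 1 + φ⁻¹ := by rw [inv_goldenRatio, ← sub_eq_add_neg, one_sub_goldenRatio]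
  have hlt : φ < (denRatio α (N + 2))⁻¹ := by
    rw [inv_denRatio_succ hα, hφ]
    have : (1 : ℝ) ≤ ⌊compQuot α (N + 2)⌋ := by exact_mod_cast one_le_floor_compQuot_succ hα (N + 1)
    linarith [hratio N le_rfl]
  exact (hratio (N + 1) (by omega)).not_gt
    ((lt_inv_comm₀ (denRatio_succ_pos hα (N + 1)) goldenRatio_pos).2 hlt)

lemma frequently_mul_distNearestInt_le_of_irrational (hα : Irrational α) :
    ∃ᶠ q : ℕ in atTop, (q : ℝ) * distNearestInt (q * α) ≤ 1 / √5 := by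
  refine frequently_atTop.2 fun N => ?_
  obtain ⟨n, hn, hgood⟩ := exists_sqrt_five_le_compQuot_add_denRatio hα N
  obtain ⟨q, hq⟩ := Int.eq_ofNat_of_zero_le (den_nonneg hα (n + 1))
  refine ⟨q, by have := le_den_succ hα n; omega, ?_⟩
  have hcast : ((q : ℕ) : ℝ) = den α (n + 1) := by rw [hq]; rfl
  calc (q : ℝ) * distNearestInt (q * α)
      ≤ den α (n + 1) * |den α (n + 1) * α - num α (n + 1)| := by
        rw [hcast]
        exact mul_le_mul_of_nonneg_left (distNearestInt_le _ _) (den_succ_pos hα n).le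
    _ = (compQuot α (n + 1) + denRatio α n)⁻¹ := den_mul_abs_den_mul_sub_num hα n
    _ ≤ 1 / √5 := by
        rw [one_div]
        exact inv_anti₀ (by positivity) hgood

end ContinuedFraction

lemma frequently_mul_distNearestInt_ratCast_eq_zero (r : ℚ) :
    ∃ᶠ q : ℕ in atTop, (q : ℝ) * distNearestInt (q * r) = 0 := by
  refine frequently_atTop.2 fun N => ⟨r.den * (N + 1), by nlinarith [r.pos], ?_⟩
  have hnum : (r : ℝ) * r.den = r.num := by exact_mod_cast Rat.mul_den_eq_num r
  have hint : ((r.den * (N + 1) : ℕ) : ℝ) * r = (((N + 1) * r.num : ℤ) : ℝ) := by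
    push_cast
    linear_combination ((N : ℝ) + 1) * hnum
  rw [hint, distNearestInt_intCast, mul_zero]

theorem hurwitz_upper_bound (α : ℝ) :
    Filter.liminf (fun q : ℕ => (q : ℝ) * distNearestInt (q * α)) Filter.atTop
      ≤ 1 / Real.sqrt 5 := by
  refine Filter.liminf_le_of_frequently_le ?_
    (Filter.isBoundedUnder_of ⟨0, fun q => mul_nonneg q.cast_nonneg (distNearestInt_nonneg _)⟩)
  by_cases hα : Irrational α
  · exact ContinuedFraction.frequently_mul_distNearestInt_le_of_irrational hα
  · obtain ⟨r, rfl⟩ := not_not.1 hα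
    exact (frequently_mul_distNearestInt_ratCast_eq_zero r).mono fun q hq => hq ▸ by positivity
end

section
/- Let Δ be a triangle in ℝ² with vertices inscribed in its minimal axis-parallel bounding rectangle, with no two vertices on the same side (an admissible triangle). If its sides a, b, c are labeled so that a and b are adjacent to the vertex at a corner of the rectangle (in counter-clockwise order), and α = |Re(a)·Im(a)|, β = |Re(b)·Im(b)|, γ = |Re(c)·Im(c)|, then area(Δ) = (1/2)·√(α² + β² + γ² − 2αβ + 2αγ + 2βγ). -/
/-- `N(z)² = |Re z · Im z|`. -/
noncomputable def Nsq (z : ℂ) : ℝ := |z.re * z.im|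

/-- Area of the triangle with vertices `p, q, r`. -/
noncomputable def triArea (p q r : ℂ) : ℝ :=
  |(q - p).re * (r - p).im - (q - p).im * (r - p).re| / 2

/-- A triangle is admissible if its three vertices lie on the boundary of its
minimal axis-parallel bounding rectangle, with no two on the same side. -/
def AdmissibleTriangle (p q r : ℂ) : Prop :=
  (p.re ≠ q.re ∧ q.re ≠ r.re ∧ p.re ≠ r.re) ∧
  (p.im ≠ q.im ∧ q.im ≠ r.im ∧ p.im ≠ r.im) ∧
  ∀ v ∈ ({p, q, r} : Set ℂ),
    v.re = min (min p.re q.re) r.re ∨ v.re = max (max p.re q.re) r.re ∨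
    v.im = min (min p.im q.im) r.im ∨ v.im = max (max p.im q.im) r.im

lemma min3_le_1 (a b c : ℝ) : min (min a b) c ≤ a :=
  le_trans (min_le_left _ _) (min_le_left _ _)
lemma min3_le_2 (a b c : ℝ) : min (min a b) c ≤ b :=
  le_trans (min_le_left _ _) (min_le_right _ _)
lemma min3_le_3 (a b c : ℝ) : min (min a b) c ≤ c := min_le_right _ _
lemma le_max3_1 (a b c : ℝ) : a ≤ max (max a b) c :=
  le_trans (le_max_left _ _) (le_max_left _ _)
lemma le_max3_2 (a b c : ℝ) : b ≤ max (max a b) c :=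
  le_trans (le_max_right _ _) (le_max_left _ _)
lemma le_max3_3 (a b c : ℝ) : c ≤ max (max a b) c := le_max_right _ _

/-- Area formula for an admissible triangle. The vertex `p` is at a corner of the
minimal bounding rectangle; the sides `a = q - p` and `b = p - r` are the two sides
adjacent to that corner and `c = r - q` is the opposite side. -/
theorem area_formula_admissible (p q r : ℂ) (h : AdmissibleTriangle p q r)
    (hcorner :
      (p.re = min (min p.re q.re) r.re ∨ p.re = max (max p.re q.re) r.re) ∧
      (p.im = min (min p.im q.im) r.im ∨ p.im = max (max p.im q.im) r.im))
    (α β γ : ℝ) (hα : α = Nsq (q - p)) (hβ : β = Nsq (p - r)) (hγ : γ = Nsq (r - q)) :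
    triArea p q r =
      Real.sqrt (α^2 + β^2 + γ^2 - 2*α*β + 2*α*γ + 2*β*γ) / 2 := by
  obtain ⟨⟨hpq, hqr, hpr⟩, ⟨hpq', hqr', hpr'⟩, hS⟩ := h
  have hq0 := hS q (by simp)
  have hr0 := hS r (by simp)
  have hcre : (p.re < q.re ∧ p.re < r.re) ∨ (q.re < p.re ∧ r.re < p.re) := by
    rcases hcorner.1 with hh | hh
    · exact Or.inl ⟨lt_of_le_of_ne (hh.trans_le (min3_le_2 _ _ _)) hpq,
        lt_of_le_of_ne (hh.trans_le (min3_le_3 _ _ _)) hpr⟩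
    · exact Or.inr ⟨lt_of_le_of_ne ((le_max3_2 _ _ _).trans hh.symm.le) hpq.symm,
        lt_of_le_of_ne ((le_max3_3 _ _ _).trans hh.symm.le) hpr.symm⟩
  have hcim : (p.im < q.im ∧ p.im < r.im) ∨ (q.im < p.im ∧ r.im < p.im) := by
    rcases hcorner.2 with hh | hh
    · exact Or.inl ⟨lt_of_le_of_ne (hh.trans_le (min3_le_2 _ _ _)) hpq',
        lt_of_le_of_ne (hh.trans_le (min3_le_3 _ _ _)) hpr'⟩
    · exact Or.inr ⟨lt_of_le_of_ne ((le_max3_2 _ _ _).trans hh.symm.le) hpq'.symm,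
        lt_of_le_of_ne ((le_max3_3 _ _ _).trans hh.symm.le) hpr'.symm⟩
  have hq' : (q.re < p.re ∧ q.re < r.re) ∨ (p.re < q.re ∧ r.re < q.re) ∨
      (q.im < p.im ∧ q.im < r.im) ∨ (p.im < q.im ∧ r.im < q.im) := by
    rcases hq0 with hh | hh | hh | hh
    · exact Or.inl ⟨lt_of_le_of_ne (hh.trans_le (min3_le_1 _ _ _)) hpq.symm,
        lt_of_le_of_ne (hh.trans_le (min3_le_3 _ _ _)) hqr⟩
    · exact Or.inr (Or.inl ⟨lt_of_le_of_ne ((le_max3_1 _ _ _).trans hh.symm.le) hpq,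
        lt_of_le_of_ne ((le_max3_3 _ _ _).trans hh.symm.le) hqr.symm⟩)
    · exact Or.inr (Or.inr (Or.inl ⟨lt_of_le_of_ne (hh.trans_le (min3_le_1 _ _ _)) hpq'.symm,
        lt_of_le_of_ne (hh.trans_le (min3_le_3 _ _ _)) hqr'⟩))
    · exact Or.inr (Or.inr (Or.inr ⟨lt_of_le_of_ne ((le_max3_1 _ _ _).trans hh.symm.le) hpq',
        lt_of_le_of_ne ((le_max3_3 _ _ _).trans hh.symm.le) hqr'.symm⟩))
  have hr' : (r.re < p.re ∧ r.re < q.re) ∨ (p.re < r.re ∧ q.re < r.re) ∨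
      (r.im < p.im ∧ r.im < q.im) ∨ (p.im < r.im ∧ q.im < r.im) := by
    rcases hr0 with hh | hh | hh | hh
    · exact Or.inl ⟨lt_of_le_of_ne (hh.trans_le (min3_le_1 _ _ _)) hpr.symm,
        lt_of_le_of_ne (hh.trans_le (min3_le_2 _ _ _)) hqr.symm⟩
    · exact Or.inr (Or.inl ⟨lt_of_le_of_ne ((le_max3_1 _ _ _).trans hh.symm.le) hpr,
        lt_of_le_of_ne ((le_max3_2 _ _ _).trans hh.symm.le) hqr⟩)
    · exact Or.inr (Or.inr (Or.inl ⟨lt_of_le_of_ne (hh.trans_le (min3_le_1 _ _ _)) hpr'.symm,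
        lt_of_le_of_ne (hh.trans_le (min3_le_2 _ _ _)) hqr'.symm⟩))
    · exact Or.inr (Or.inr (Or.inr ⟨lt_of_le_of_ne ((le_max3_1 _ _ _).trans hh.symm.le) hpr',
        lt_of_le_of_ne ((le_max3_2 _ _ _).trans hh.symm.le) hqr'⟩))
  -- A, B, C share a sign
  have hsign :
      (0 ≤ (q.re - p.re) * (q.im - p.im) ∧ 0 ≤ (r.re - p.re) * (r.im - p.im) ∧
        0 ≤ (q.re - r.re) * (r.im - q.im)) ∨
      ((q.re - p.re) * (q.im - p.im) ≤ 0 ∧ (r.re - p.re) * (r.im - p.im) ≤ 0 ∧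
        (q.re - r.re) * (r.im - q.im) ≤ 0) := by
    rcases hcre with ⟨c1, c2⟩ | ⟨c1, c2⟩ <;> rcases hcim with ⟨c3, c4⟩ | ⟨c3, c4⟩ <;>
      rcases hq' with ⟨d1, d2⟩ | ⟨d1, d2⟩ | ⟨d1, d2⟩ | ⟨d1, d2⟩ <;>
      rcases hr' with ⟨e1, e2⟩ | ⟨e1, e2⟩ | ⟨e1, e2⟩ | ⟨e1, e2⟩ <;>
      first
        | (exfalso; linarith)
        | (left; refine ⟨by nlinarith, by nlinarith, by nlinarith⟩)
        | (right; refine ⟨by nlinarith, by nlinarith, by nlinarith⟩)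
  have hA : α = |(q.re - p.re) * (q.im - p.im)| := by
    rw [hα]; unfold Nsq; simp [Complex.sub_re, Complex.sub_im]
  have hB : β = |(r.re - p.re) * (r.im - p.im)| := by
    rw [hβ]; unfold Nsq
    rw [show (p - r).re * (p - r).im = (r.re - p.re) * (r.im - p.im) by
      simp [Complex.sub_re, Complex.sub_im]; ring]
  have hC : γ = |(q.re - r.re) * (r.im - q.im)| := by
    rw [hγ]; unfold Nsq
    rw [show (r - q).re * (r - q).im = -((q.re - r.re) * (r.im - q.im)) by
      simp [Complex.sub_re, Complex.sub_im]; ring, abs_neg]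
  have hkey : α^2 + β^2 + γ^2 - 2*α*β + 2*α*γ + 2*β*γ =
      ((q - p).re * (r - p).im - (q - p).im * (r - p).re)^2 := by
    have hre : (q - p).re = q.re - p.re := by simp [Complex.sub_re]
    have him : (q - p).im = q.im - p.im := by simp [Complex.sub_im]
    have hre2 : (r - p).re = r.re - p.re := by simp [Complex.sub_re]
    have him2 : (r - p).im = r.im - p.im := by simp [Complex.sub_im]
    rw [hre, him, hre2, him2]
    rcases hsign with ⟨s1, s2, s3⟩ | ⟨s1, s2, s3⟩
    · rw [hA, hB, hC, abs_of_nonneg s1, abs_of_nonneg s2, abs_of_nonneg s3]; ring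
    · rw [hA, hB, hC, abs_of_nonpos s1, abs_of_nonpos s2, abs_of_nonpos s3]; ring
  rw [hkey, Real.sqrt_sq_eq_abs]
  rfl
end

section
/- Let Δ be an admissible triangle with sides a, b, c and let α = N(a)², β = N(b)², γ = N(c)², m = min{α,β,γ}, M = max{α,β,γ}. Then (√5/2)·m ≤ area(Δ) ≤ (1/2)·√(m² + 4M²) ≤ (√5/2)·M. -/
/-! ### Auxiliary machinery -/

def Mid (u v w : ℝ) : Prop := (v < u ∧ u < w) ∨ (w < u ∧ u < v)

lemma mid_symm {u v w : ℝ} (h : Mid u v w) : Mid u w v := Or.symm h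

lemma mid3 {a b c : ℝ} (h1 : a ≠ b) (h2 : b ≠ c) (h3 : a ≠ c) :
    Mid a b c ∨ Mid b a c ∨ Mid c a b := by
  rcases lt_trichotomy a b with u | u | u
  · rcases lt_trichotomy b c with v | v | v
    · exact Or.inr (Or.inl (Or.inl ⟨u, v⟩))
    · exact absurd v h2
    · rcases lt_trichotomy a c with t | t | t
      · exact Or.inr (Or.inr (Or.inl ⟨t, v⟩))
      · exact absurd t h3
      · exact Or.inl (Or.inr ⟨t, u⟩)
  · exact absurd u h1
  · rcases lt_trichotomy b c with v | v | v
    · rcases lt_trichotomy a c with t | t | t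
      · exact Or.inl (Or.inl ⟨u, t⟩)
      · exact absurd t h3
      · exact Or.inr (Or.inr (Or.inr ⟨v, t⟩))
    · exact absurd v h2
    · exact Or.inr (Or.inl (Or.inr ⟨v, u⟩))

lemma nsq_nonneg (z : ℂ) : 0 ≤ Nsq z := abs_nonneg _

lemma nsymm (z w : ℂ) : Nsq (z - w) = Nsq (w - z) := by
  rw [Nsq, Nsq, Complex.sub_re, Complex.sub_im, Complex.sub_re, Complex.sub_im,
    show (z.re - w.re) * (z.im - w.im) = (w.re - z.re) * (w.im - z.im) from by ring]

lemma triArea_swap12 (p q r : ℂ) : triArea q p r = triArea p q r := by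
  rw [triArea, triArea,
    show (p - q).re * (r - q).im - (p - q).im * (r - q).re =
      -((q - p).re * (r - p).im - (q - p).im * (r - p).re) from by
        simp [Complex.sub_re, Complex.sub_im]; ring, abs_neg]

lemma triArea_swap23 (p q r : ℂ) : triArea p r q = triArea p q r := by
  rw [triArea, triArea,
    show (r - p).re * (q - p).im - (r - p).im * (q - p).re =
      -((q - p).re * (r - p).im - (q - p).im * (r - p).re) from by ring, abs_neg]

lemma absdiff {a c : ℝ} (hs : (0 < c ∧ c < a) ∨ (a < c ∧ c < 0)) :
    |a - c| = |a| - |c| := by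
  rcases hs with ⟨h1, h2⟩ | ⟨h1, h2⟩
  · rw [abs_of_pos (by linarith), abs_of_pos (by linarith), abs_of_pos h1]
  · rw [abs_of_nonpos (by linarith), abs_of_neg (by linarith), abs_of_neg h2]; ring

lemma absx {a c : ℝ} (hs : (0 < c ∧ c < a) ∨ (a < c ∧ c < 0)) :
    0 < |c| ∧ |c| < |a| := by
  rcases hs with ⟨h1, h2⟩ | ⟨h1, h2⟩
  · rw [abs_of_pos h1, abs_of_pos (by linarith)]; exact ⟨h1, h2⟩
  · rw [abs_of_neg h2, abs_of_neg (by linarith)]; constructor <;> linarith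

lemma absdet {a c b d : ℝ} (hre : (0 < c ∧ c < a) ∨ (a < c ∧ c < 0))
    (him : (0 < b ∧ b < d) ∨ (d < b ∧ b < 0)) :
    |a * d - b * c| = |a| * |d| - |b| * |c| := by
  rcases hre with ⟨h1, h2⟩ | ⟨h1, h2⟩ <;> rcases him with ⟨h3, h4⟩ | ⟨h3, h4⟩
  · rw [abs_of_pos (by nlinarith), abs_of_pos (by linarith), abs_of_pos (by linarith),
      abs_of_pos h3, abs_of_pos h1]
  · rw [abs_of_nonpos (by nlinarith), abs_of_pos (by linarith), abs_of_neg (by linarith),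
      abs_of_neg h4, abs_of_pos h1]; ring
  · rw [abs_of_nonpos (by nlinarith), abs_of_neg (by linarith), abs_of_pos (by linarith),
      abs_of_pos h3, abs_of_neg h2]; ring
  · rw [abs_of_pos (by nlinarith), abs_of_neg (by linarith), abs_of_neg (by linarith),
      abs_of_neg h4, abs_of_neg h2]; ring

lemma key (w h x y m M : ℝ) (hx0 : 0 < x) (hxw : x < w) (hy0 : 0 < y) (hyh : y < h)
    (hm0 : 0 ≤ m) (h1 : m ≤ w*y) (h2 : m ≤ x*h) (h3 : m ≤ (w-x)*(h-y))
    (hmor : m = w*y ∨ m = x*h ∨ m = (w-x)*(h-y))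
    (hM1 : w*y ≤ M) (hM2 : x*h ≤ M) (hM3 : (w-x)*(h-y) ≤ M) :
    Real.sqrt 5 / 2 * m ≤ (w*h - x*y)/2 ∧
    (w*h - x*y)/2 ≤ Real.sqrt (m^2 + 4*M^2) / 2 ∧
    Real.sqrt (m^2 + 4*M^2) / 2 ≤ Real.sqrt 5 / 2 * M := by
  have hw : 0 < w := hx0.trans hxw
  have hh : 0 < h := hy0.trans hyh
  have hS : 0 < w*h - x*y := by nlinarith
  have hM0 : 0 ≤ M := (mul_pos hw hy0).le.trans hM1
  have hmM : m ≤ M := h1.trans hM1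
  have hA : 5*m^2 ≤ (w*h - x*y)^2 := by
    nlinarith [sq_nonneg (w*y - x*h), sq_nonneg ((w-x)*(h-y) - m),
      mul_nonneg hm0 (sub_nonneg.2 h1), mul_nonneg hm0 (sub_nonneg.2 h2),
      mul_nonneg hm0 (sub_nonneg.2 h3),
      mul_nonneg (sub_nonneg.2 h3) (mul_pos hw hy0).le,
      mul_nonneg (sub_nonneg.2 h3) (mul_pos hx0 hh).le]
  have hB : (w*h - x*y)^2 ≤ m^2 + 4*M^2 := by
    rcases hmor with rfl | rfl | rfl
    · nlinarith [mul_nonneg (sub_nonneg.2 hM2) (sub_nonneg.2 hM3),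
        mul_nonneg (sub_nonneg.2 hM1) (sub_nonneg.2 hM2),
        mul_nonneg (sub_nonneg.2 hM1) (sub_nonneg.2 hM3),
        mul_nonneg (sub_nonneg.2 h2) (sub_nonneg.2 h3),
        mul_nonneg (sub_nonneg.2 hM2) (sub_nonneg.2 h3),
        mul_nonneg (sub_nonneg.2 hM3) (sub_nonneg.2 h2),
        sq_nonneg (x*h - (w-x)*(h-y)), mul_pos (mul_pos hw hy0) (mul_pos hx0 hh)]
    · nlinarith [mul_nonneg (sub_nonneg.2 hM1) (sub_nonneg.2 hM3),
        mul_nonneg (sub_nonneg.2 hM1) (sub_nonneg.2 hM2),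
        mul_nonneg (sub_nonneg.2 hM2) (sub_nonneg.2 hM3),
        mul_nonneg (sub_nonneg.2 h1) (sub_nonneg.2 h3),
        mul_nonneg (sub_nonneg.2 hM1) (sub_nonneg.2 h3),
        mul_nonneg (sub_nonneg.2 hM3) (sub_nonneg.2 h1),
        sq_nonneg (w*y - (w-x)*(h-y)), mul_pos (mul_pos hw hy0) (mul_pos hx0 hh)]
    · nlinarith [mul_nonneg (sub_nonneg.2 hM1) (sub_nonneg.2 hM2),
        mul_nonneg (sub_nonneg.2 hM1) (sub_nonneg.2 hM3),
        mul_nonneg (sub_nonneg.2 hM2) (sub_nonneg.2 hM3),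
        mul_nonneg (sub_nonneg.2 h1) (sub_nonneg.2 h2),
        mul_nonneg (sub_nonneg.2 hM1) (sub_nonneg.2 h2),
        mul_nonneg (sub_nonneg.2 hM2) (sub_nonneg.2 h1),
        sq_nonneg (w*y - x*h), mul_pos (mul_pos hw hy0) (mul_pos hx0 hh)]
  refine ⟨?_, ?_, ?_⟩
  · have e1 : Real.sqrt 5 * m = Real.sqrt (5*m^2) := by
      rw [Real.sqrt_mul (by norm_num : (0:ℝ) ≤ 5), Real.sqrt_sq hm0]
    have e2 : Real.sqrt (5*m^2) ≤ w*h - x*y := by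
      calc Real.sqrt (5*m^2) ≤ Real.sqrt ((w*h - x*y)^2) := Real.sqrt_le_sqrt hA
        _ = w*h - x*y := Real.sqrt_sq hS.le
    rw [div_mul_eq_mul_div]; linarith [e1 ▸ e2]
  · have : w*h - x*y ≤ Real.sqrt (m^2 + 4*M^2) := by
      calc w*h - x*y = Real.sqrt ((w*h - x*y)^2) := (Real.sqrt_sq hS.le).symm
        _ ≤ Real.sqrt (m^2 + 4*M^2) := Real.sqrt_le_sqrt hB
    linarith
  · have h5 : m^2 + 4*M^2 ≤ 5*M^2 := by nlinarith
    have : Real.sqrt (m^2 + 4*M^2) ≤ Real.sqrt 5 * M := by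
      calc Real.sqrt (m^2 + 4*M^2) ≤ Real.sqrt (5*M^2) := Real.sqrt_le_sqrt h5
        _ = Real.sqrt 5 * M := by
          rw [Real.sqrt_mul (by norm_num : (0:ℝ) ≤ 5), Real.sqrt_sq hM0]
    rw [div_mul_eq_mul_div]; linarith

lemma main' (P Q R : ℂ) (hre : Mid R.re P.re Q.re) (him : Mid Q.im P.im R.im)
    (m M : ℝ) (hm0 : 0 ≤ m)
    (h1 : m ≤ Nsq (Q - P)) (h2 : m ≤ Nsq (P - R)) (h3 : m ≤ Nsq (R - Q))
    (hmor : m = Nsq (Q - P) ∨ m = Nsq (P - R) ∨ m = Nsq (R - Q))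
    (hM1 : Nsq (Q - P) ≤ M) (hM2 : Nsq (P - R) ≤ M) (hM3 : Nsq (R - Q) ≤ M) :
    Real.sqrt 5 / 2 * m ≤ triArea P Q R ∧
    triArea P Q R ≤ Real.sqrt (m^2 + 4*M^2) / 2 ∧
    Real.sqrt (m^2 + 4*M^2) / 2 ≤ Real.sqrt 5 / 2 * M := by
  have hsre : (0 < R.re - P.re ∧ R.re - P.re < Q.re - P.re) ∨
      (Q.re - P.re < R.re - P.re ∧ R.re - P.re < 0) := by
    rcases hre with ⟨u1, u2⟩ | ⟨u1, u2⟩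
    · left; constructor <;> linarith
    · right; constructor <;> linarith
  have hsim : (0 < Q.im - P.im ∧ Q.im - P.im < R.im - P.im) ∨
      (R.im - P.im < Q.im - P.im ∧ Q.im - P.im < 0) := by
    rcases him with ⟨u1, u2⟩ | ⟨u1, u2⟩
    · left; constructor <;> linarith
    · right; constructor <;> linarith
  have e1 : Nsq (Q - P) = |Q.re - P.re| * |Q.im - P.im| := by
    rw [Nsq, Complex.sub_re, Complex.sub_im, abs_mul]
  have e2 : Nsq (P - R) = |R.re - P.re| * |R.im - P.im| := by
    rw [Nsq, Complex.sub_re, Complex.sub_im, abs_mul,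
      abs_sub_comm P.re R.re, abs_sub_comm P.im R.im]
  have e3 : Nsq (R - Q) =
      (|Q.re - P.re| - |R.re - P.re|) * (|R.im - P.im| - |Q.im - P.im|) := by
    rw [Nsq, Complex.sub_re, Complex.sub_im, abs_mul,
      show R.re - Q.re = -((Q.re - P.re) - (R.re - P.re)) from by ring, abs_neg,
      show R.im - Q.im = (R.im - P.im) - (Q.im - P.im) from by ring,
      absdiff hsre, absdiff hsim]
  have et : triArea P Q R =
      (|Q.re - P.re| * |R.im - P.im| - |R.re - P.re| * |Q.im - P.im|) / 2 := by
    rw [triArea, Complex.sub_re, Complex.sub_im, Complex.sub_re, Complex.sub_im,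
      absdet hsre hsim]
    ring
  rw [e1] at h1 hM1
  rw [e2] at h2 hM2
  rw [e3] at h3 hM3
  rw [e1, e2, e3] at hmor
  obtain ⟨k1, k2, k3⟩ := key (|Q.re - P.re|) (|R.im - P.im|) (|R.re - P.re|)
    (|Q.im - P.im|) m M (absx hsre).1 (absx hsre).2 (absx hsim).1 (absx hsim).2
    hm0 h1 h2 h3 hmor hM1 hM2 hM3
  rw [et]
  exact ⟨k1, k2, k3⟩

theorem area_bounds_admissible (p q r : ℂ) (h : AdmissibleTriangle p q r)
    (α β γ m M : ℝ)
    (hα : α = Nsq (q - p)) (hβ : β = Nsq (p - r)) (hγ : γ = Nsq (r - q))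
    (hm : m = min (min α β) γ) (hM : M = max (max α β) γ) :
    Real.sqrt 5 / 2 * m ≤ triArea p q r ∧
    triArea p q r ≤ Real.sqrt (m^2 + 4*M^2) / 2 ∧
    Real.sqrt (m^2 + 4*M^2) / 2 ≤ Real.sqrt 5 / 2 * M := by
  obtain ⟨⟨d1, d2, d3⟩, ⟨i1, i2, i3⟩, hbd⟩ := h
  have hα0 : 0 ≤ α := by rw [hα]; exact nsq_nonneg _
  have hβ0 : 0 ≤ β := by rw [hβ]; exact nsq_nonneg _
  have hγ0 : 0 ≤ γ := by rw [hγ]; exact nsq_nonneg _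
  have hm0 : 0 ≤ m := by rw [hm]; exact le_min (le_min hα0 hβ0) hγ0
  have hmα : m ≤ α := by rw [hm]; exact (min_le_left _ _).trans (min_le_left _ _)
  have hmβ : m ≤ β := by rw [hm]; exact (min_le_left _ _).trans (min_le_right _ _)
  have hmγ : m ≤ γ := by rw [hm]; exact min_le_right _ _
  have hMα : α ≤ M := by rw [hM]; exact (le_max_left _ _).trans (le_max_left _ _)
  have hMβ : β ≤ M := by rw [hM]; exact (le_max_right _ _).trans (le_max_left _ _)
  have hMγ : γ ≤ M := by rw [hM]; exact le_max_right _ _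
  have hmor3 : m = α ∨ m = β ∨ m = γ := by
    rw [hm]
    rcases min_cases α β with ⟨u, _⟩ | ⟨u, _⟩ <;>
      rcases min_cases (min α β) γ with ⟨v, _⟩ | ⟨v, _⟩
    · exact Or.inl (v.trans u)
    · exact Or.inr (Or.inr v)
    · exact Or.inr (Or.inl (v.trans u))
    · exact Or.inr (Or.inr v)
  subst hα; subst hβ; subst hγ
  have tqrp : triArea q r p = triArea p q r :=
    (triArea_swap23 q p r).trans (triArea_swap12 p q r)
  have trqp : triArea r q p = triArea p q r := (triArea_swap12 q r p).trans tqrp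
  have trpq : triArea r p q = triArea p q r := (triArea_swap23 r q p).trans trqp
  have rmin1 : min (min p.re q.re) r.re ≤ p.re := (min_le_left _ _).trans (min_le_left _ _)
  have rmin2 : min (min p.re q.re) r.re ≤ q.re := (min_le_left _ _).trans (min_le_right _ _)
  have rmin3 : min (min p.re q.re) r.re ≤ r.re := min_le_right _ _
  have rmax1 : p.re ≤ max (max p.re q.re) r.re := (le_max_left _ _).trans (le_max_left _ _)
  have rmax2 : q.re ≤ max (max p.re q.re) r.re := (le_max_right _ _).trans (le_max_left _ _)
  have rmax3 : r.re ≤ max (max p.re q.re) r.re := le_max_right _ _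
  have imin1 : min (min p.im q.im) r.im ≤ p.im := (min_le_left _ _).trans (min_le_left _ _)
  have imin2 : min (min p.im q.im) r.im ≤ q.im := (min_le_left _ _).trans (min_le_right _ _)
  have imin3 : min (min p.im q.im) r.im ≤ r.im := min_le_right _ _
  have imax1 : p.im ≤ max (max p.im q.im) r.im := (le_max_left _ _).trans (le_max_left _ _)
  have imax2 : q.im ≤ max (max p.im q.im) r.im := (le_max_right _ _).trans (le_max_left _ _)
  have imax3 : r.im ≤ max (max p.im q.im) r.im := le_max_right _ _
  rcases mid3 d1 d2 d3 with hr | hr | hr <;> rcases mid3 i1 i2 i3 with hi | hi | hi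
  -- mid-re = p, mid-im = p : impossible
  · exfalso
    rcases hbd p (by simp) with hv | hv | hv | hv <;>
      rcases hr with ⟨a1, a2⟩ | ⟨a1, a2⟩ <;>
      rcases hi with ⟨b1, b2⟩ | ⟨b1, b2⟩ <;> linarith
  -- mid-re = p, mid-im = q : (P,Q,R) = (r,q,p)
  · obtain ⟨k1, k2, k3⟩ := main' r q p (mid_symm hr) (mid_symm hi) m M hm0
      (by rw [nsymm q r]; exact hmγ)
      (by rw [nsymm r p]; exact hmβ)
      (by rw [nsymm p q]; exact hmα)
      (by rcases hmor3 with hh | hh | hh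
          · exact Or.inr (Or.inr (by rw [nsymm p q]; exact hh))
          · exact Or.inr (Or.inl (by rw [nsymm r p]; exact hh))
          · exact Or.inl (by rw [nsymm q r]; exact hh))
      (by rw [nsymm q r]; exact hMγ)
      (by rw [nsymm r p]; exact hMβ)
      (by rw [nsymm p q]; exact hMα)
    rw [← trqp]
    exact ⟨k1, k2, k3⟩
  -- mid-re = p, mid-im = r : (P,Q,R) = (q,r,p)
  · obtain ⟨k1, k2, k3⟩ := main' q r p hr (mid_symm hi) m M hm0
      hmγ hmα hmβ
      (by rcases hmor3 with hh | hh | hh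
          · exact Or.inr (Or.inl hh)
          · exact Or.inr (Or.inr hh)
          · exact Or.inl hh)
      hMγ hMα hMβ
    rw [← tqrp]
    exact ⟨k1, k2, k3⟩
  -- mid-re = q, mid-im = p : (P,Q,R) = (r,p,q)
  · obtain ⟨k1, k2, k3⟩ := main' r p q (mid_symm hr) (mid_symm hi) m M hm0
      hmβ hmγ hmα
      (by rcases hmor3 with hh | hh | hh
          · exact Or.inr (Or.inr hh)
          · exact Or.inl hh
          · exact Or.inr (Or.inl hh))
      hMβ hMγ hMα
    rw [← trpq]
    exact ⟨k1, k2, k3⟩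
  -- mid-re = q, mid-im = q : impossible
  · exfalso
    rcases hbd q (by simp) with hv | hv | hv | hv <;>
      rcases hr with ⟨a1, a2⟩ | ⟨a1, a2⟩ <;>
      rcases hi with ⟨b1, b2⟩ | ⟨b1, b2⟩ <;> linarith
  -- mid-re = q, mid-im = r : (P,Q,R) = (p,r,q)
  · obtain ⟨k1, k2, k3⟩ := main' p r q hr hi m M hm0
      (by rw [nsymm r p]; exact hmβ)
      (by rw [nsymm p q]; exact hmα)
      (by rw [nsymm q r]; exact hmγ)
      (by rcases hmor3 with hh | hh | hh
          · exact Or.inr (Or.inl (by rw [nsymm p q]; exact hh))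
          · exact Or.inl (by rw [nsymm r p]; exact hh)
          · exact Or.inr (Or.inr (by rw [nsymm q r]; exact hh)))
      (by rw [nsymm r p]; exact hMβ)
      (by rw [nsymm p q]; exact hMα)
      (by rw [nsymm q r]; exact hMγ)
    rw [← triArea_swap23 p q r]
    exact ⟨k1, k2, k3⟩
  -- mid-re = r, mid-im = p : (P,Q,R) = (q,p,r)
  · obtain ⟨k1, k2, k3⟩ := main' q p r (mid_symm hr) hi m M hm0
      (by rw [nsymm p q]; exact hmα)
      (by rw [nsymm q r]; exact hmγ)
      (by rw [nsymm r p]; exact hmβ)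
      (by rcases hmor3 with hh | hh | hh
          · exact Or.inl (by rw [nsymm p q]; exact hh)
          · exact Or.inr (Or.inr (by rw [nsymm r p]; exact hh))
          · exact Or.inr (Or.inl (by rw [nsymm q r]; exact hh)))
      (by rw [nsymm p q]; exact hMα)
      (by rw [nsymm q r]; exact hMγ)
      (by rw [nsymm r p]; exact hMβ)
    rw [← triArea_swap12 p q r]
    exact ⟨k1, k2, k3⟩
  -- mid-re = r, mid-im = q : (P,Q,R) = (p,q,r)
  · exact main' p q r hr hi m M hm0 hmα hmβ hmγ hmor3 hMα hMβ hMγ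
  -- mid-re = r, mid-im = r : impossible
  · exfalso
    rcases hbd r (by simp) with hv | hv | hv | hv <;>
      rcases hr with ⟨a1, a2⟩ | ⟨a1, a2⟩ <;>
      rcases hi with ⟨b1, b2⟩ | ⟨b1, b2⟩ <;> linarith
end

section
/- Let Δ be an admissible triangle with side quantities α, β, γ, minimum m and maximum M. Suppose 0 < ε < √2 − √5/2 and area(Δ) ≤ (√5/2 + ε)·m. Then M ≤ (1 + (2√2 + √5)·ε)·m. -/
private lemma keyA (x1 y1 x2 y2 : ℝ) (h1 : 0 < (x1*y1)*(x2*y2))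
    (h3 : (x1*y1) * ((x1-x2)*(y1-y2)) ≤ 0) :
    (|x1*y1| + |x2*y2| + |(x1-x2)*(y1-y2)|)^2
      = (x1*y2 - x2*y1)^2 + 4*((x1*y1)*(x2*y2)) := by
  rcases lt_trichotomy (x1*y1) 0 with hP|hP|hP
  · have hQ : x2*y2 < 0 := by nlinarith
    have hR : 0 ≤ (x1-x2)*(y1-y2) := by nlinarith
    rw [abs_of_neg hP, abs_of_neg hQ, abs_of_nonneg hR]; ring
  · rw [hP] at h1; simp at h1
  · have hQ : 0 < x2*y2 := by nlinarith
    have hR : (x1-x2)*(y1-y2) ≤ 0 := by nlinarith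
    rw [abs_of_pos hP, abs_of_pos hQ, abs_of_nonpos hR]; ring

private lemma twoOfThree (A B : ℝ) (hA : A ≠ 0) (hB : B ≠ 0) (hAB : A ≠ B) :
    (0 < A*B ∧ 0 < A*(A-B)) ∨ (0 < A*B ∧ 0 < B*(B-A)) ∨
    (0 < A*(A-B) ∧ 0 < B*(B-A)) := by
  rcases hA.lt_or_gt with h|h <;> rcases hB.lt_or_gt with h'|h' <;>
    rcases hAB.lt_or_gt with h''|h'' <;>
    first
      | (exact Or.inl ⟨by nlinarith, by nlinarith⟩)
      | (exact Or.inr (Or.inl ⟨by nlinarith, by nlinarith⟩))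
      | (exact Or.inr (Or.inr ⟨by nlinarith, by nlinarith⟩))
      | (exfalso; linarith)

private lemma signLemma (C D : ℝ) (h2 : 0 < C*D) (hr : 0 < D*(D-C)) :
    C*(C-D) ≤ 0 := by
  rcases lt_trichotomy D 0 with h|h|h
  · have hC : C < 0 := by nlinarith
    have h1 : D - C < 0 := by nlinarith
    nlinarith [mul_pos (neg_pos.2 hC) (by linarith : (0:ℝ) < C - D)]
  · rw [h, mul_zero] at h2; exact absurd h2 (lt_irrefl 0)
  · have hC : 0 < C := by nlinarith
    have h1 : 0 < D - C := by nlinarith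
    nlinarith [mul_pos hC h1]

private lemma step2 (A B C D : ℝ) (h1 : 0 < A*B) (h2 : 0 < C*D)
    (Hq : 0 < A*(A-B) ∨ 0 < C*(C-D)) (Hr : 0 < B*(B-A) ∨ 0 < D*(D-C)) :
    0 < (A*C)*(B*D) ∧ (A*C)*((A-B)*(C-D)) ≤ 0 := by
  constructor
  · nlinarith [mul_pos h1 h2]
  · rcases Hq with hq|hq <;> rcases Hr with hr|hr
    · nlinarith [mul_pos hq hr, mul_nonneg h1.le (sq_nonneg (A-B))]
    · have hC : C*(C-D) ≤ 0 := signLemma C D h2 hr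
      calc (A*C)*((A-B)*(C-D)) = (A*(A-B))*(C*(C-D)) := by ring
        _ ≤ 0 := mul_nonpos_of_nonneg_of_nonpos hq.le hC
    · have hA : A*(A-B) ≤ 0 := signLemma A B h1 hr
      calc (A*C)*((A-B)*(C-D)) = (A*(A-B))*(C*(C-D)) := by ring
        _ ≤ 0 := mul_nonpos_of_nonpos_of_nonneg hA hq.le
    · nlinarith [mul_pos hq hr, mul_nonneg h2.le (sq_nonneg (C-D))]

private lemma extremal (x u v : ℝ) (hxu : x ≠ u) (hxv : x ≠ v)
    (h : (x ≤ u ∧ x ≤ v) ∨ (u ≤ x ∧ v ≤ x)) : 0 < (u - x) * (v - x) := by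
  rcases h with ⟨h1, h2⟩ | ⟨h1, h2⟩
  · exact mul_pos (sub_pos.mpr (h1.lt_of_ne hxu)) (sub_pos.mpr (h2.lt_of_ne hxv))
  · exact mul_pos_of_neg_of_neg (sub_neg.mpr (h1.lt_of_ne hxu.symm))
      (sub_neg.mpr (h2.lt_of_ne hxv.symm))

private lemma base (A B C D : ℝ) (c1 : 0 < A*B) (c2 : 0 < C*D)
    (Hq : 0 < A*(A-B) ∨ 0 < C*(C-D)) (Hr : 0 < B*(B-A) ∨ 0 < D*(D-C)) :
    (|A*C| + |B*D| + |(A-B)*(C-D)|)^2 = (A*D - B*C)^2 + 4*(|A*C| * |B*D|) := by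
  obtain ⟨s1, s2'⟩ := step2 A B C D c1 c2 Hq Hr
  have hkey := keyA A C B D s1 s2'
  have habs : |A*C| * |B*D| = (A*C)*(B*D) := by
    rw [← abs_mul, abs_of_pos s1]
  rw [habs]; linear_combination hkey

private lemma bigreal (A B C D : ℝ) (hA : A ≠ 0) (hB : B ≠ 0) (hAB : A ≠ B)
    (hC : C ≠ 0) (hD : D ≠ 0) (hCD : C ≠ D)
    (Hp : 0 < A*B ∨ 0 < C*D) (Hq : 0 < A*(A-B) ∨ 0 < C*(C-D))
    (Hr : 0 < B*(B-A) ∨ 0 < D*(D-C)) :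
    (|A*C| + |B*D| + |(A-B)*(C-D)|)^2 = (A*D - B*C)^2 + 4*(|A*C| * |B*D|)
    ∨ (|A*C| + |B*D| + |(A-B)*(C-D)|)^2
        = (A*D - B*C)^2 + 4*(|A*C| * |(A-B)*(C-D)|)
    ∨ (|A*C| + |B*D| + |(A-B)*(C-D)|)^2
        = (A*D - B*C)^2 + 4*(|B*D| * |(A-B)*(C-D)|) := by
  have baseq : 0 < A*(A-B) → 0 < C*(C-D) →
      (|A*C| + |B*D| + |(A-B)*(C-D)|)^2
        = (A*D - B*C)^2 + 4*(|A*C| * |(A-B)*(C-D)|) := by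
    intro c1 c2
    have hp' : 0 < (-A)*((-A)-(B-A)) ∨ 0 < (-C)*((-C)-(D-C)) := by
      rcases Hp with h'|h'
      · exact Or.inl (by nlinarith)
      · exact Or.inr (by nlinarith)
    have hr' : 0 < (B-A)*((B-A)-(-A)) ∨ 0 < (D-C)*((D-C)-(-C)) := by
      rcases Hr with h'|h'
      · exact Or.inl (by nlinarith)
      · exact Or.inr (by nlinarith)
    have hb := base (-A) (B-A) (-C) (D-C)
      (by nlinarith : 0 < (-A)*(B-A)) (by nlinarith : 0 < (-C)*(D-C)) hp' hr'
    rw [show (-A)*(-C) = A*C from by ring,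
        show (B-A)*(D-C) = (A-B)*(C-D) from by ring,
        show (-A - (B-A))*(-C - (D-C)) = B*D from by ring] at hb
    linear_combination hb
  have baser : 0 < B*(B-A) → 0 < D*(D-C) →
      (|A*C| + |B*D| + |(A-B)*(C-D)|)^2
        = (A*D - B*C)^2 + 4*(|B*D| * |(A-B)*(C-D)|) := by
    intro c1 c2
    have hp' : 0 < (-B)*((-B)-(A-B)) ∨ 0 < (-D)*((-D)-(C-D)) := by
      rcases Hp with h'|h'
      · exact Or.inl (by nlinarith)
      · exact Or.inr (by nlinarith)
    have hq' : 0 < (A-B)*((A-B)-(-B)) ∨ 0 < (C-D)*((C-D)-(-D)) := by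
      rcases Hq with h'|h'
      · exact Or.inl (by nlinarith)
      · exact Or.inr (by nlinarith)
    have hb := base (-B) (A-B) (-D) (C-D)
      (by nlinarith : 0 < (-B)*(A-B)) (by nlinarith : 0 < (-D)*(C-D)) hp' hq'
    rw [show (-B)*(-D) = B*D from by ring,
        show (A-B)*(C-D) = (A-B)*(C-D) from by ring,
        show (-B - (A-B))*(-D - (C-D)) = A*C from by ring] at hb
    linear_combination hb
  rcases twoOfThree A B hA hB hAB with ⟨c1,c2⟩|⟨c1,c2⟩|⟨c1,c2⟩ <;>
    rcases twoOfThree C D hC hD hCD with ⟨d1,d2⟩|⟨d1,d2⟩|⟨d1,d2⟩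
  · exact Or.inl (base A B C D c1 d1 Hq Hr)
  · exact Or.inl (base A B C D c1 d1 Hq Hr)
  · exact Or.inr (Or.inl (baseq c2 d1))
  · exact Or.inl (base A B C D c1 d1 Hq Hr)
  · exact Or.inl (base A B C D c1 d1 Hq Hr)
  · exact Or.inr (Or.inr (baser c2 d2))
  · exact Or.inr (Or.inl (baseq c1 d2))
  · exact Or.inr (Or.inr (baser c2 d2))
  · exact Or.inr (Or.inl (baseq c1 d1))

private lemma final (a b c m ε S : ℝ) (hma : m ≤ a) (hmb : m ≤ b) (hmc : m ≤ c)
    (hm0 : 0 < m)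
    (hid : (a+b+c)^2 = S + 4*(a*b)) (hSle : S ≤ (Real.sqrt 5 + 2*ε)^2 * m^2)
    (hε0 : 0 < ε) (hε1 : ε < Real.sqrt 2 - Real.sqrt 5 / 2) :
    a ≤ (1 + (2*Real.sqrt 2 + Real.sqrt 5)*ε)*m ∧
    b ≤ (1 + (2*Real.sqrt 2 + Real.sqrt 5)*ε)*m ∧
    c ≤ (1 + (2*Real.sqrt 2 + Real.sqrt 5)*ε)*m := by
  have hs2 : (Real.sqrt 2)^2 = 2 := Real.sq_sqrt (by norm_num)
  have hs5 : (Real.sqrt 5)^2 = 5 := Real.sq_sqrt (by norm_num)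
  have hs2n : 0 ≤ Real.sqrt 2 := Real.sqrt_nonneg 2
  have hs5n : 0 ≤ Real.sqrt 5 := Real.sqrt_nonneg 5
  have ha0 : 0 < a := lt_of_lt_of_le hm0 hma
  have hb0 : 0 < b := lt_of_lt_of_le hm0 hmb
  have hc0 : 0 < c := lt_of_lt_of_le hm0 hmc
  have hs5e : (Real.sqrt 5)^2*(ε^2*m^2) = 5*(ε^2*m^2) := by rw [hs5]
  have hs2e : (Real.sqrt 2)^2*(ε^2*m^2) = 2*(ε^2*m^2) := by rw [hs2]
  have h4 : (a+b+c)^2 - 4*(a*b)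
      ≤ 5*m^2 + 4*Real.sqrt 5*(ε*m^2) + 4*(ε^2*m^2) := by
    have : (Real.sqrt 5 + 2*ε)^2 * m^2
        = (Real.sqrt 5)^2*m^2 + 4*Real.sqrt 5*(ε*m^2) + 4*(ε^2*m^2) := by ring
    rw [this, hs5] at hSle
    linarith [hid, hSle]
  have hee : 2*(ε^2*m^2) ≤ (2*Real.sqrt 2 - Real.sqrt 5)*(ε*m^2) := by
    have h2 : ε*ε*m^2 ≤ (Real.sqrt 2 - Real.sqrt 5/2)*ε*m^2 :=
      mul_le_mul_of_nonneg_right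
        (mul_le_mul_of_nonneg_right hε1.le hε0.le) (sq_nonneg m)
    linarith [h2]
  have hcc : m^2 ≤ c^2 := by nlinarith [hmc, hm0]
  have hcab : m*(a+b) ≤ c*(a+b) := mul_le_mul_of_nonneg_right hmc (by linarith)
  have hma' : m*m ≤ m*a := mul_le_mul_of_nonneg_left hma hm0.le
  have hmb' : m*m ≤ m*b := mul_le_mul_of_nonneg_left hmb hm0.le
  have hca' : c*m ≤ c*a := mul_le_mul_of_nonneg_left hma hc0.le
  have hcb' : c*m ≤ c*b := mul_le_mul_of_nonneg_left hmb hc0.le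
  have ha : a ≤ (1 + (2*Real.sqrt 2 + Real.sqrt 5)*ε)*m := by
    have h2m : 0 < 2*m := by linarith
    have h5 : (2*m)*a ≤ (2*m)*((1 + (2*Real.sqrt 2 + Real.sqrt 5)*ε)*m) := by
      linarith [h4, sq_nonneg (a-b), hcc, hcab, hmb', hee]
    exact le_of_mul_le_mul_left h5 h2m
  have hb : b ≤ (1 + (2*Real.sqrt 2 + Real.sqrt 5)*ε)*m := by
    have h2m : 0 < 2*m := by linarith
    have h5 : (2*m)*b ≤ (2*m)*((1 + (2*Real.sqrt 2 + Real.sqrt 5)*ε)*m) := by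
      linarith [h4, sq_nonneg (a-b), hcc, hcab, hma', hee]
    exact le_of_mul_le_mul_left h5 h2m
  have hc1 : (c+2*m)^2 ≤ 9*m^2 + 4*Real.sqrt 5*(ε*m^2) + 4*(ε^2*m^2) := by
    linarith [h4, sq_nonneg (a-b), hca', hcb']
  have t1 : 0 ≤ Real.sqrt 2*(ε*m^2) := by positivity
  have t2 : 0 ≤ Real.sqrt 5*(ε*m^2) := by positivity
  have t3 : 0 ≤ (Real.sqrt 2*Real.sqrt 5)*(ε^2*m^2) := by positivity
  have hc2 : 9*m^2 + 4*Real.sqrt 5*(ε*m^2) + 4*(ε^2*m^2)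
      ≤ ((3 + (2*Real.sqrt 2 + Real.sqrt 5)*ε)*m)^2 := by
    linarith [t1, t2, t3, hs2e, hs5e, sq_nonneg (ε*m)]
  have hY : 0 < (3 + (2*Real.sqrt 2 + Real.sqrt 5)*ε)*m := by
    have h1 : 0 ≤ (2*Real.sqrt 2 + Real.sqrt 5)*ε := by positivity
    have : 0 < 3 + (2*Real.sqrt 2 + Real.sqrt 5)*ε := by linarith
    exact mul_pos this hm0
  have hc3 : c + 2*m ≤ (3 + (2*Real.sqrt 2 + Real.sqrt 5)*ε)*m := by
    by_contra hcon
    push_neg at hcon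
    have hsq := mul_self_lt_mul_self hY.le hcon
    nlinarith [hc1, hc2, hsq]
  have hc : c ≤ (1 + (2*Real.sqrt 2 + Real.sqrt 5)*ε)*m := by linarith [hc3]
  exact ⟨ha, hb, hc⟩

theorem distorsion_from_area (p q r : ℂ) (h : AdmissibleTriangle p q r)
    (α β γ m M ε : ℝ)
    (hα : α = Nsq (q - p)) (hβ : β = Nsq (p - r)) (hγ : γ = Nsq (r - q))
    (hm : m = min (min α β) γ) (hM : M = max (max α β) γ)
    (hε0 : 0 < ε) (hε1 : ε < Real.sqrt 2 - Real.sqrt 5 / 2)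
    (harea : triArea p q r ≤ (Real.sqrt 5 / 2 + ε) * m) :
    M ≤ (1 + (2 * Real.sqrt 2 + Real.sqrt 5) * ε) * m := by
  obtain ⟨⟨hx1, hx2, hx3⟩, ⟨hy1, hy2, hy3⟩, hadm⟩ := h
  -- per-vertex extremality facts
  have Ep : 0 < (q.re - p.re)*(r.re - p.re) ∨ 0 < (q.im - p.im)*(r.im - p.im) := by
    rcases hadm p (by simp) with hc|hc|hc|hc
    · exact Or.inl (extremal p.re q.re r.re hx1 hx3 (Or.inl
        ⟨by rw [hc]; exact le_trans (min_le_left _ _) (min_le_right _ _),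
         by rw [hc]; exact min_le_right _ _⟩))
    · exact Or.inl (extremal p.re q.re r.re hx1 hx3 (Or.inr
        ⟨by rw [hc]; exact le_trans (le_max_right _ _) (le_max_left _ _),
         by rw [hc]; exact le_max_right _ _⟩))
    · exact Or.inr (extremal p.im q.im r.im hy1 hy3 (Or.inl
        ⟨by rw [hc]; exact le_trans (min_le_left _ _) (min_le_right _ _),
         by rw [hc]; exact min_le_right _ _⟩))
    · exact Or.inr (extremal p.im q.im r.im hy1 hy3 (Or.inr
        ⟨by rw [hc]; exact le_trans (le_max_right _ _) (le_max_left _ _),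
         by rw [hc]; exact le_max_right _ _⟩))
  have Eq' : 0 < (p.re - q.re)*(r.re - q.re) ∨ 0 < (p.im - q.im)*(r.im - q.im) := by
    rcases hadm q (by simp) with hc|hc|hc|hc
    · exact Or.inl (extremal q.re p.re r.re hx1.symm hx2 (Or.inl
        ⟨by rw [hc]; exact le_trans (min_le_left _ _) (min_le_left _ _),
         by rw [hc]; exact min_le_right _ _⟩))
    · exact Or.inl (extremal q.re p.re r.re hx1.symm hx2 (Or.inr
        ⟨by rw [hc]; exact le_trans (le_max_left _ _) (le_max_left _ _),
         by rw [hc]; exact le_max_right _ _⟩))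
    · exact Or.inr (extremal q.im p.im r.im hy1.symm hy2 (Or.inl
        ⟨by rw [hc]; exact le_trans (min_le_left _ _) (min_le_left _ _),
         by rw [hc]; exact min_le_right _ _⟩))
    · exact Or.inr (extremal q.im p.im r.im hy1.symm hy2 (Or.inr
        ⟨by rw [hc]; exact le_trans (le_max_left _ _) (le_max_left _ _),
         by rw [hc]; exact le_max_right _ _⟩))
  have Er : 0 < (p.re - r.re)*(q.re - r.re) ∨ 0 < (p.im - r.im)*(q.im - r.im) := by
    rcases hadm r (by simp) with hc|hc|hc|hc
    · exact Or.inl (extremal r.re p.re q.re hx3.symm hx2.symm (Or.inl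
        ⟨by rw [hc]; exact le_trans (min_le_left _ _) (min_le_left _ _),
         by rw [hc]; exact le_trans (min_le_left _ _) (min_le_right _ _)⟩))
    · exact Or.inl (extremal r.re p.re q.re hx3.symm hx2.symm (Or.inr
        ⟨by rw [hc]; exact le_trans (le_max_left _ _) (le_max_left _ _),
         by rw [hc]; exact le_trans (le_max_right _ _) (le_max_left _ _)⟩))
    · exact Or.inr (extremal r.im p.im q.im hy3.symm hy2.symm (Or.inl
        ⟨by rw [hc]; exact le_trans (min_le_left _ _) (min_le_left _ _),
         by rw [hc]; exact le_trans (min_le_left _ _) (min_le_right _ _)⟩))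
    · exact Or.inr (extremal r.im p.im q.im hy3.symm hy2.symm (Or.inr
        ⟨by rw [hc]; exact le_trans (le_max_left _ _) (le_max_left _ _),
         by rw [hc]; exact le_trans (le_max_right _ _) (le_max_left _ _)⟩))
  -- nonzero differences
  have hA : (q.re - p.re) ≠ 0 := sub_ne_zero.mpr (Ne.symm hx1)
  have hB : (r.re - p.re) ≠ 0 := sub_ne_zero.mpr (Ne.symm hx3)
  have hAB : (q.re - p.re) ≠ (r.re - p.re) := by
    intro hh; exact hx2 (by linarith)
  have hC : (q.im - p.im) ≠ 0 := sub_ne_zero.mpr (Ne.symm hy1)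
  have hD : (r.im - p.im) ≠ 0 := sub_ne_zero.mpr (Ne.symm hy3)
  have hCD : (q.im - p.im) ≠ (r.im - p.im) := by
    intro hh; exact hy2 (by linarith)
  have HQ : 0 < (q.re - p.re)*((q.re - p.re)-(r.re - p.re))
      ∨ 0 < (q.im - p.im)*((q.im - p.im)-(r.im - p.im)) := by
    rcases Eq' with h'|h'
    · exact Or.inl (by nlinarith [h'])
    · exact Or.inr (by nlinarith [h'])
  have HR : 0 < (r.re - p.re)*((r.re - p.re)-(q.re - p.re))
      ∨ 0 < (r.im - p.im)*((r.im - p.im)-(q.im - p.im)) := by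
    rcases Er with h'|h'
    · exact Or.inl (by nlinarith [h'])
    · exact Or.inr (by nlinarith [h'])
  have hbig := bigreal (q.re - p.re) (r.re - p.re) (q.im - p.im) (r.im - p.im)
    hA hB hAB hC hD hCD Ep HQ HR
  -- identify α, β, γ
  have eα : α = |(q.re - p.re) * (q.im - p.im)| := by
    rw [hα]; unfold Nsq; rw [Complex.sub_re, Complex.sub_im]
  have eβ : β = |(r.re - p.re) * (r.im - p.im)| := by
    rw [hβ]; unfold Nsq; rw [Complex.sub_re, Complex.sub_im]
    rw [show (p.re - r.re)*(p.im - r.im) = (r.re - p.re)*(r.im - p.im) from by ring]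
  have eγ : γ = |((q.re - p.re) - (r.re - p.re)) * ((q.im - p.im) - (r.im - p.im))| := by
    rw [hγ]; unfold Nsq; rw [Complex.sub_re, Complex.sub_im]
    rw [show (r.re - q.re)*(r.im - q.im)
        = ((q.re - p.re) - (r.re - p.re)) * ((q.im - p.im) - (r.im - p.im)) from by ring]
  rw [← eα, ← eβ, ← eγ] at hbig
  -- positivity
  have hα0 : 0 < α := by rw [eα]; exact abs_pos.mpr (mul_ne_zero hA hC)
  have hβ0 : 0 < β := by rw [eβ]; exact abs_pos.mpr (mul_ne_zero hB hD)
  have hγ0 : 0 < γ := by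
    rw [eγ]
    exact abs_pos.mpr (mul_ne_zero (sub_ne_zero.mpr hAB) (sub_ne_zero.mpr hCD))
  have hm0 : 0 < m := by rw [hm]; exact lt_min (lt_min hα0 hβ0) hγ0
  have hma : m ≤ α := by rw [hm]; exact le_trans (min_le_left _ _) (min_le_left _ _)
  have hmb : m ≤ β := by rw [hm]; exact le_trans (min_le_left _ _) (min_le_right _ _)
  have hmc : m ≤ γ := by rw [hm]; exact min_le_right _ _
  -- area bound
  have hT0 : 0 ≤ triArea p q r := by unfold triArea; positivity
  have hcr : (2*triArea p q r)^2
      = ((q.re - p.re)*(r.im - p.im) - (r.re - p.re)*(q.im - p.im))^2 := by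
    unfold triArea
    simp only [Complex.sub_re, Complex.sub_im]
    rw [mul_pow, div_pow, sq_abs]
    ring
  have h2T : 2*triArea p q r ≤ (Real.sqrt 5 + 2*ε)*m := by linarith [harea]
  have hr0 : 0 ≤ (Real.sqrt 5 + 2*ε)*m := by positivity
  have hSle : ((q.re - p.re)*(r.im - p.im) - (r.re - p.re)*(q.im - p.im))^2
      ≤ (Real.sqrt 5 + 2*ε)^2*m^2 := by
    nlinarith [mul_le_mul h2T h2T (by linarith : 0 ≤ 2*triArea p q r) hr0, hcr]
  -- M is one of α, β, γ
  have hMor : M = α ∨ M = β ∨ M = γ := by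
    rcases max_choice (max α β) γ with h'|h'
    · rcases max_choice α β with h''|h''
      · exact Or.inl (by rw [hM, h', h''])
      · exact Or.inr (Or.inl (by rw [hM, h', h'']))
    · exact Or.inr (Or.inr (by rw [hM, h']))
  rcases hbig with hb1|hb1|hb1
  · obtain ⟨u1, u2, u3⟩ := final α β γ m ε _ hma hmb hmc hm0 hb1 hSle hε0 hε1
    rcases hMor with hMe|hMe|hMe <;> rw [hMe]
    · exact u1
    · exact u2
    · exact u3
  · obtain ⟨u1, u2, u3⟩ := final α γ β m ε
      (((q.re - p.re)*(r.im - p.im) - (r.re - p.re)*(q.im - p.im))^2)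
      hma hmc hmb hm0 (by linear_combination hb1) hSle hε0 hε1
    rcases hMor with hMe|hMe|hMe <;> rw [hMe]
    · exact u1
    · exact u3
    · exact u2
  · obtain ⟨u1, u2, u3⟩ := final β γ α m ε
      (((q.re - p.re)*(r.im - p.im) - (r.re - p.re)*(q.im - p.im))^2)
      hmb hmc hma hm0 (by linear_combination hb1) hSle hε0 hε1
    rcases hMor with hMe|hMe|hMe <;> rw [hMe]
    · exact u3
    · exact u1
    · exact u2
end
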